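/- arXiv:1910.09221 — 2 statements merged into one kernel-verified Lean document; each statement's English description precedes it below -/
import Mathlib

section
/- Let V be a real vector space and let m, b, s, b_K be symmetric bilinear forms on V with m, b, s positive semidefinite. Assume: (i) there exist c_F ∈ (0,2] such that for all φ, ψ ∈ V with b(ψ,η) + s(ψ,η) = -m(φ,η) for all η ∈ V, one has m(φ,φ) + b_K(ψ,ψ) ≥ (c_F/2) m(φ,φ); (ii) there is c_P > 0 with m(ψ,ψ) ≤ c_P b(ψ,ψ) for all ψ ∈ V (Poincaré); (iii) b(ψ,ψ) + s(ψ,ψ) = 0 implies ψ = 0. Then the homogeneous coupled system m(φ,η) + b(ψ,η) + s(ψ,η) = 0 (∀η ∈ V), b(φ,ξ) + s(φ,ξ) - b_K(ψ,ξ) = 0 (∀ξ ∈ V), and m(ψ,ψ) = 0 ⟹ b_K(ψ,·) = 0 together imply ψ = 0 and φ = 0, provided that additionally m(φ,φ) = 0 implies m(φ,η) = 0 for all η (Cauchy–Schwarz for the seminorm m) and b_K satisfies |b_K(ψ,ξ)|² ≤ C b(ψ,ψ) b(ξ,ξ) for some C ≥ 0. -/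
/-!
Testing the first equation with `φ` and the second with `ψ` gives `b_K(ψ,ψ) = -m(φ,φ)`, so the
coercivity estimate reads `0 ≥ (c_F/2) m(φ,φ)` and forces `m(φ,φ) = 0`. Then `m(φ,·) = 0`, the
first equation tested with `ψ` gives `b(ψ,ψ) + s(ψ,ψ) = 0`, hence `ψ = 0`, and the second equation
tested with `φ` gives `b(φ,φ) + s(φ,φ) = 0`, hence `φ = 0`.
-/

theorem bK_self_eq_neg_m_self_of_coupled {V : Type*} [AddCommGroup V]
    [Module ℝ V] {m b s bK : LinearMap.BilinForm ℝ V}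
    (hbsym : ∀ u v, b u v = b v u) (hssym : ∀ u v, s u v = s v u) {ψ φ : V}
    (heq1 : ∀ η : V, m φ η + b ψ η + s ψ η = 0)
    (heq2 : ∀ ξ : V, b φ ξ + s φ ξ - bK ψ ξ = 0) :
    bK ψ ψ = -m φ φ := by
  linarith [heq1 φ, heq2 ψ, hbsym φ ψ, hssym φ ψ]

theorem stmt2_general {V : Type*} [AddCommGroup V] [Module ℝ V]
    (m b s bK : LinearMap.BilinForm ℝ V)
    (hbsym : ∀ u v, b u v = b v u)
    (hssym : ∀ u v, s u v = s v u)
    (hmpsd : ∀ v, 0 ≤ m v v)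
    (cF : ℝ) (hcF : 0 < cF)
    (hcoer : ∀ φ ψ : V, (∀ η : V, b ψ η + s ψ η = -m φ η) →
      m φ φ + bK ψ ψ ≥ (cF / 2) * m φ φ)
    (hdef : ∀ ψ : V, b ψ ψ + s ψ ψ = 0 → ψ = 0)
    (hmCS : ∀ φ : V, m φ φ = 0 → ∀ η : V, m φ η = 0)
    (ψ φ : V)
    (heq1 : ∀ η : V, m φ η + b ψ η + s ψ η = 0)
    (heq2 : ∀ ξ : V, b φ ξ + s φ ξ - bK ψ ξ = 0) :
    ψ = 0 ∧ φ = 0 := by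
  have hbK : bK ψ ψ = -m φ φ :=
    bK_self_eq_neg_m_self_of_coupled hbsym hssym heq1 heq2
  have hmφ : m φ φ = 0 := by
    have hco := hcoer φ ψ fun η => by linarith [heq1 η]
    rw [hbK] at hco
    nlinarith [hmpsd φ]
  have hψ : ψ = 0 := hdef ψ (by linarith [heq1 ψ, hmCS φ hmφ ψ])
  refine ⟨hψ, hdef φ ?_⟩
  simpa [hψ] using heq2 φ

theorem stmt2 {V : Type*} [AddCommGroup V] [Module ℝ V]
    (m b s bK : LinearMap.BilinForm ℝ V)
    (hmsym : ∀ u v, m u v = m v u) (hbsym : ∀ u v, b u v = b v u)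
    (hssym : ∀ u v, s u v = s v u) (hbKsym : ∀ u v, bK u v = bK v u)
    (hmpsd : ∀ v, 0 ≤ m v v) (hbpsd : ∀ v, 0 ≤ b v v) (hspsd : ∀ v, 0 ≤ s v v)
    (cF : ℝ) (hcF : 0 < cF) (hcF2 : cF ≤ 2)
    (hcoer : ∀ φ ψ : V, (∀ η : V, b ψ η + s ψ η = -m φ η) →
      m φ φ + bK ψ ψ ≥ (cF / 2) * m φ φ)
    (cP : ℝ) (hcP : 0 < cP)
    (hPoincare : ∀ ψ : V, m ψ ψ ≤ cP * b ψ ψ)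
    (hdef : ∀ ψ : V, b ψ ψ + s ψ ψ = 0 → ψ = 0)
    (hmCS : ∀ φ : V, m φ φ = 0 → ∀ η : V, m φ η = 0)
    (C : ℝ) (hC : 0 ≤ C)
    (hbKbd : ∀ ψ ξ : V, (bK ψ ξ) ^ 2 ≤ C * b ψ ψ * b ξ ξ)
    (ψ φ : V)
    (heq1 : ∀ η : V, m φ η + b ψ η + s ψ η = 0)
    (heq2 : ∀ ξ : V, b φ ξ + s φ ξ - bK ψ ξ = 0)
    (hker : m ψ ψ = 0 → ∀ ξ : V, bK ψ ξ = 0) :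
    ψ = 0 ∧ φ = 0 :=
  stmt2_general m b s bK hbsym hssym hmpsd cF hcF hcoer hdef hmCS ψ φ heq1 heq2
end

section
/- Let H be a real Hilbert space, V_h ⊆ H a closed subspace, and A a symmetric bilinear form on H that is coercive and continuous on V_h. Let p ∈ H and p_h ∈ V_h satisfy A(p, ξ_h) = ⟨z, ∇ξ_h⟩ and A(p_h, ξ_h) = ⟨z_h, ∇ξ_h⟩ for all ξ_h ∈ V_h, where ∇ : H → W is a bounded linear map into a Hilbert space W with ‖∇ξ‖_W ≤ ‖ξ‖_A for all ξ, and z, z_h ∈ W. Then ‖p - p_h‖_A ≤ 2·inf_{ξ_h ∈ V_h}‖p - ξ_h‖_A + ‖z - z_h‖_W. -/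
/-!
Write `e = p - p_h` and, for `ξ_h ∈ V_h`, `η = ξ_h - p_h ∈ V_h`. Symmetry of `A` gives
`A(e, e) = A(e - η, e - η) + 2 A(e, η) - A(η, η)`, and subtracting the two discrete equations
gives the perturbed Galerkin orthogonality `A(e, η) = ⟪z - z_h, ∇η⟫ ≤ ‖z - z_h‖ ‖η‖_A`.
Completing the square in `‖η‖_A` yields `A(e, e) ≤ ‖p - ξ_h‖_A² + ‖z - z_h‖²`.
-/

open scoped RealInnerProductSpace

namespace LinearMap.BilinForm

variable {M : Type*} [AddCommGroup M] [Module ℝ M]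

theorem apply_self_eq_apply_sub_self {A : LinearMap.BilinForm ℝ M}
    (hsym : ∀ u v : M, A u v = A v u)
    (e η : M) : A e e = A (e - η) (e - η) + 2 * A e η - A η η := by
  simp only [map_sub, LinearMap.sub_apply]
  rw [hsym η e]
  ring

theorem apply_self_le_add_sq_of_apply_le {A : LinearMap.BilinForm ℝ M}
    (hsym : ∀ u v : M, A u v = A v u)
    {Vh : Submodule ℝ M} (hpos : ∀ u ∈ Vh, 0 ≤ A u u) {e : M} {d : ℝ}
    (horth : ∀ η ∈ Vh, A e η ≤ d * Real.sqrt (A η η)) {w : M} (hw : e - w ∈ Vh) :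
    A e e ≤ A w w + d ^ 2 := by
  set η := e - w
  have hsq : Real.sqrt (A η η) ^ 2 = A η η := Real.sq_sqrt (hpos η hw)
  have hid : A e e = A w w + 2 * A e η - A η η := by
    simpa [η] using apply_self_eq_apply_sub_self hsym e η
  nlinarith [horth η hw, sq_nonneg (d - Real.sqrt (A η η))]

end LinearMap.BilinForm

theorem Real.sqrt_le_sqrt_add_of_le_add_sq {a b d : ℝ} (h : a ≤ b + d ^ 2) (hd : 0 ≤ d) :
    Real.sqrt a ≤ Real.sqrt b + d := by
  rw [Real.sqrt_le_left (by positivity)]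
  have hb : b ≤ Real.sqrt b ^ 2 := Real.sq_sqrt' (x := b) ▸ le_max_left b 0
  nlinarith [Real.sqrt_nonneg b]

theorem stmt12_general {H W : Type*} [NormedAddCommGroup H] [InnerProductSpace ℝ H]
    [NormedAddCommGroup W] [InnerProductSpace ℝ W]
    (Vh : Submodule ℝ H)
    (A : LinearMap.BilinForm ℝ H)
    (hsym : ∀ u v : H, A u v = A v u)
    (α : ℝ) (hα : 0 < α) (hcoer : ∀ u ∈ Vh, α * ‖u‖ ^ 2 ≤ A u u)
    (grad : H →L[ℝ] W)
    (hgrad : ∀ ξ : H, ‖grad ξ‖ ≤ Real.sqrt (A ξ ξ))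
    (z zh : W) (p : H) (ph : H) (hph : ph ∈ Vh)
    (hp : ∀ ξ ∈ Vh, A p ξ = ⟪z, grad ξ⟫)
    (hphEq : ∀ ξ ∈ Vh, A ph ξ = ⟪zh, grad ξ⟫) :
    ∀ ξh ∈ Vh, Real.sqrt (A (p - ph) (p - ph)) ≤
      2 * Real.sqrt (A (p - ξh) (p - ξh)) + ‖z - zh‖ := by
  intro ξh hξh
  have hpos : ∀ u ∈ Vh, 0 ≤ A u u := fun u hu => le_trans (by positivity) (hcoer u hu)
  have horth : ∀ η ∈ Vh, A (p - ph) η ≤ ‖z - zh‖ * Real.sqrt (A η η) := fun η hη =>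
    calc A (p - ph) η = ⟪z - zh, grad η⟫ := by
          rw [map_sub, LinearMap.sub_apply, hp η hη, hphEq η hη, inner_sub_left]
      _ ≤ ‖z - zh‖ * ‖grad η‖ := real_inner_le_norm _ _
      _ ≤ ‖z - zh‖ * Real.sqrt (A η η) := by gcongr; exact hgrad η
  have hw : p - ph - (p - ξh) ∈ Vh := by
    simpa using Vh.sub_mem hξh hph
  calc Real.sqrt (A (p - ph) (p - ph)) ≤ Real.sqrt (A (p - ξh) (p - ξh)) + ‖z - zh‖ :=
        Real.sqrt_le_sqrt_add_of_le_add_sq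
          (LinearMap.BilinForm.apply_self_le_add_sq_of_apply_le hsym hpos horth hw)
          (norm_nonneg _)
    _ ≤ 2 * Real.sqrt (A (p - ξh) (p - ξh)) + ‖z - zh‖ := by
        linarith [Real.sqrt_nonneg (A (p - ξh) (p - ξh))]

theorem stmt12 {H W : Type*} [NormedAddCommGroup H] [InnerProductSpace ℝ H]
    [CompleteSpace H] [NormedAddCommGroup W] [InnerProductSpace ℝ W]
    [CompleteSpace W]
    (Vh : Submodule ℝ H) (hVh : IsClosed (Vh : Set H))
    (A : LinearMap.BilinForm ℝ H)
    (hsym : ∀ u v : H, A u v = A v u)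
    (CA : ℝ) (hcont : ∀ u ∈ Vh, ∀ v ∈ Vh, |A u v| ≤ CA * ‖u‖ * ‖v‖)
    (α : ℝ) (hα : 0 < α) (hcoer : ∀ u ∈ Vh, α * ‖u‖ ^ 2 ≤ A u u)
    (grad : H →L[ℝ] W)
    (hgrad : ∀ ξ : H, ‖grad ξ‖ ≤ Real.sqrt (A ξ ξ))
    (z zh : W) (p : H) (ph : H) (hph : ph ∈ Vh)
    (hp : ∀ ξ ∈ Vh, A p ξ = ⟪z, grad ξ⟫)
    (hphEq : ∀ ξ ∈ Vh, A ph ξ = ⟪zh, grad ξ⟫) :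
    ∀ ξh ∈ Vh, Real.sqrt (A (p - ph) (p - ph)) ≤
      2 * Real.sqrt (A (p - ξh) (p - ξh)) + ‖z - zh‖ :=
  stmt12_general Vh A hsym α hα hcoer grad hgrad z zh p ph hph hp hphEq
end
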